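/- Let φ0(x) = π^{-1/4}·exp(−x²/2) and φ1(x) = √2·π^{-1/4}·x·exp(−x²/2) be the first two normalized Hermite functions, let 0 ≤ p ≤ 1, and define ψ(x,y) = √p·φ0(x)·φ1(y) + √(1−p)·φ1(x)·φ0(y), the wavefunction of the photonic Bell state Ψ⁺ = √p|01⟩ + √(1−p)|10⟩. Then ∫∫_{ℝ²} sgn(x·y)·ψ(x,y)² dx dy = (4/π)·√(p(1−p)); that is, the bit quadrature correlation equals 4/π times the negativity N_B = √(p(1−p)). -/

import Mathlib

open MeasureTheory Real

/-!
Since `sgn (x y) = sgn x · sgn y`, the correlation of `(α f(x) g(y) + β g(x) f(y))²` factorises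
into one-dimensional integrals: `(α² + β²) ⟨f²⟩⟨g²⟩ + 2αβ ⟨f g⟩²`, where `⟨h⟩ = ∫ sgn x · h x`.
For the Hermite functions `φ0²` and `φ1²` are even, so `⟨φ0²⟩ = ⟨φ1²⟩ = 0`, while
`⟨φ0 φ1⟩ = √(2/π) ∫ |x| e^{-x²} dx = √(2/π)`. Only the interference term survives, giving
`2 √p √(1-p) · 2/π`.
-/

namespace Real

lemma sign_mul (x y : ℝ) : sign (x * y) = sign x * sign y := by
  rcases lt_trichotomy x 0 with hx | hx | hx <;> rcases lt_trichotomy y 0 with hy | hy | hy <;>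
    simp [sign_of_neg, sign_of_pos, hx, hy, mul_pos_of_neg_of_neg, mul_neg_of_neg_of_pos,
      mul_neg_of_pos_of_neg]

lemma sign_mul_self_eq_abs (x : ℝ) : sign x * x = |x| := by
  rcases lt_trichotomy x 0 with hx | hx | hx <;>
    simp [sign_of_neg, sign_of_pos, hx, abs_of_neg, abs_of_pos]

lemma abs_sign_le_one (x : ℝ) : |sign x| ≤ 1 := by
  rcases sign_apply_eq x with h | h | h <;> simp [h]

lemma measurable_sign : Measurable sign :=
  Measurable.ite measurableSet_Iio measurable_const
    (Measurable.ite measurableSet_Ioi measurable_const measurable_const)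

lemma sqrt_mul_sqrt_one_sub (p : ℝ) : √p * √(1 - p) = √(p * (1 - p)) := by
  rcases le_total 0 p with hp | hp
  · exact (sqrt_mul hp _).symm
  · exact (sqrt_mul' p (by linarith)).symm

end Real

lemma MeasureTheory.Integrable.sign_mul {f : ℝ → ℝ} (hf : Integrable f) :
    Integrable fun x => sign x * f x :=
  hf.bdd_mul measurable_sign.aestronglyMeasurable (ae_of_all _ abs_sign_le_one)

lemma integral_sign_mul_eq_zero_of_even {f : ℝ → ℝ} (hf : ∀ x, f (-x) = f x) :
    ∫ x, sign x * f x = 0 := by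
  have h := integral_neg_eq_self (fun x => sign x * f x) volume
  simp only [sign_neg, hf, neg_mul, integral_neg] at h
  linarith

lemma integral_Ioi_mul_exp_neg_mul_sq {b : ℝ} (hb : 0 < b) :
    ∫ x in Set.Ioi 0, x * exp (-b * x ^ 2) = (2 * b)⁻¹ := by
  have h := integral_mul_cexp_neg_mul_sq (b := (b : ℂ)) (by simpa using hb)
  have hc : ((∫ x in Set.Ioi 0, x * exp (-b * x ^ 2) : ℝ) : ℂ) = (2 * b)⁻¹ := by
    rw [← integral_complex_ofReal]
    push_cast
    exact h
  exact_mod_cast hc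

lemma integral_sign_mul_mul_exp_neg_mul_sq {b : ℝ} (hb : 0 < b) :
    ∫ x, sign x * (x * exp (-b * x ^ 2)) = b⁻¹ := by
  have h := integral_comp_abs (f := fun x => x * exp (-b * x ^ 2))
  simp only [sq_abs, integral_Ioi_mul_exp_neg_mul_sq hb] at h
  simp_rw [← mul_assoc, sign_mul_self_eq_abs, h]
  field_simp

noncomputable def signCorrelation (W : ℝ → ℝ → ℝ) : ℝ :=
  ∫ q : ℝ × ℝ, sign (q.1 * q.2) * W q.1 q.2

theorem signCorrelation_superposition_sq {f g : ℝ → ℝ} (hf : Integrable fun x => f x ^ 2)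
    (hg : Integrable fun x => g x ^ 2) (hfg : Integrable fun x => f x * g x) (α β : ℝ) :
    signCorrelation (fun x y => (α * f x * g y + β * g x * f y) ^ 2) =
      (α ^ 2 + β ^ 2) * (∫ x, sign x * f x ^ 2) * (∫ x, sign x * g x ^ 2) +
        2 * α * β * (∫ x, sign x * (f x * g x)) ^ 2 := by
  set F := fun x => sign x * f x ^ 2
  set G := fun x => sign x * g x ^ 2
  set H := fun x => sign x * (f x * g x)
  have expand : (fun q : ℝ × ℝ => sign (q.1 * q.2) * (α * f q.1 * g q.2 + β * g q.1 * f q.2) ^ 2)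
      = fun q => α ^ 2 * (F q.1 * G q.2) + β ^ 2 * (G q.1 * F q.2) +
          2 * α * β * (H q.1 * H q.2) := by
    funext q
    simp only [F, G, H, sign_mul]
    ring
  have hF : Integrable F := hf.sign_mul
  have hG : Integrable G := hg.sign_mul
  have hH : Integrable H := hfg.sign_mul
  have hFG := (hF.mul_prod hG).const_mul (α ^ 2)
  have hGF := (hG.mul_prod hF).const_mul (β ^ 2)
  have hHH := (hH.mul_prod hH).const_mul (2 * α * β)
  rw [signCorrelation, expand, Measure.volume_eq_prod, integral_add (hFG.fun_add hGF) hHH,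
    integral_add hFG hGF, integral_const_mul, integral_const_mul, integral_const_mul,
    integral_prod_mul F G, integral_prod_mul G F, integral_prod_mul H H]
  ring

noncomputable def hermiteFunction0 (x : ℝ) : ℝ := π ^ (-(1 : ℝ) / 4) * exp (-x ^ 2 / 2)

noncomputable def hermiteFunction1 (x : ℝ) : ℝ :=
  √2 * π ^ (-(1 : ℝ) / 4) * x * exp (-x ^ 2 / 2)

lemma pi_rpow_neg_one_div_four_sq : (π ^ (-(1 : ℝ) / 4)) ^ 2 = (√π)⁻¹ := by
  rw [← rpow_natCast, ← rpow_mul pi_pos.le, sqrt_eq_rpow, ← rpow_neg pi_pos.le]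
  norm_num

lemma exp_neg_sq_div_two_sq (x : ℝ) : exp (-x ^ 2 / 2) ^ 2 = exp (-x ^ 2) := by
  rw [← exp_nat_mul]
  ring_nf

lemma hermiteFunction0_sq (x : ℝ) : hermiteFunction0 x ^ 2 = (√π)⁻¹ * exp (-x ^ 2) := by
  rw [hermiteFunction0, mul_pow, pi_rpow_neg_one_div_four_sq, exp_neg_sq_div_two_sq]

lemma hermiteFunction1_sq (x : ℝ) :
    hermiteFunction1 x ^ 2 = 2 * (√π)⁻¹ * (x ^ 2 * exp (-x ^ 2)) := by
  rw [hermiteFunction1, mul_pow, mul_pow, mul_pow, pi_rpow_neg_one_div_four_sq,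
    exp_neg_sq_div_two_sq, sq_sqrt zero_le_two]
  ring

lemma hermiteFunction0_mul_hermiteFunction1 (x : ℝ) :
    hermiteFunction0 x * hermiteFunction1 x = √2 * (√π)⁻¹ * (x * exp (-x ^ 2)) := by
  rw [hermiteFunction0, hermiteFunction1, ← pi_rpow_neg_one_div_four_sq, ← exp_neg_sq_div_two_sq]
  ring

lemma hermiteFunction0_neg (x : ℝ) : hermiteFunction0 (-x) = hermiteFunction0 x := by
  simp [hermiteFunction0]

lemma hermiteFunction1_neg (x : ℝ) : hermiteFunction1 (-x) = -hermiteFunction1 x := by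
  simp [hermiteFunction1]

lemma integrable_hermiteFunction0_sq : Integrable fun x => hermiteFunction0 x ^ 2 := by
  simp_rw [hermiteFunction0_sq]
  simpa using (integrable_exp_neg_mul_sq one_pos).const_mul (√π)⁻¹

lemma integrable_hermiteFunction1_sq : Integrable fun x => hermiteFunction1 x ^ 2 := by
  simp_rw [hermiteFunction1_sq]
  simpa using (integrable_rpow_mul_exp_neg_mul_sq one_pos (s := 2) (by norm_num)).const_mul
    (2 * (√π)⁻¹)

lemma integrable_hermiteFunction0_mul_hermiteFunction1 :
    Integrable fun x => hermiteFunction0 x * hermiteFunction1 x := by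
  simp_rw [hermiteFunction0_mul_hermiteFunction1]
  simpa using (integrable_mul_exp_neg_mul_sq one_pos).const_mul (√2 * (√π)⁻¹)

lemma integral_sign_mul_hermiteFunction0_sq : ∫ x, sign x * hermiteFunction0 x ^ 2 = 0 :=
  integral_sign_mul_eq_zero_of_even fun x => by rw [hermiteFunction0_neg]

lemma integral_sign_mul_hermiteFunction1_sq : ∫ x, sign x * hermiteFunction1 x ^ 2 = 0 :=
  integral_sign_mul_eq_zero_of_even fun x => by rw [hermiteFunction1_neg, neg_sq]

lemma integral_sign_mul_hermiteFunction0_mul_hermiteFunction1 :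
    ∫ x, sign x * (hermiteFunction0 x * hermiteFunction1 x) = √2 * (√π)⁻¹ := by
  have h (x : ℝ) : sign x * (hermiteFunction0 x * hermiteFunction1 x) =
      √2 * (√π)⁻¹ * (sign x * (x * exp (-1 * x ^ 2))) := by
    rw [hermiteFunction0_mul_hermiteFunction1, neg_one_mul]
    ring
  simp_rw [h]
  rw [integral_const_mul, integral_sign_mul_mul_exp_neg_mul_sq one_pos, inv_one, mul_one]

theorem bell_state_psi_bit_correlation_general (p : ℝ)
    (phi0 phi1 : ℝ → ℝ)
    (hphi0 : ∀ x : ℝ, phi0 x = π ^ (-(1 : ℝ) / 4) * Real.exp (-x ^ 2 / 2))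
    (hphi1 : ∀ x : ℝ, phi1 x =
      Real.sqrt 2 * π ^ (-(1 : ℝ) / 4) * x * Real.exp (-x ^ 2 / 2))
    (psi : ℝ → ℝ → ℝ)
    (hpsi : ∀ x y : ℝ, psi x y =
      Real.sqrt p * phi0 x * phi1 y + Real.sqrt (1 - p) * phi1 x * phi0 y) :
    ∫ q : ℝ × ℝ, Real.sign (q.1 * q.2) * (psi q.1 q.2) ^ 2
      = (4 / π) * Real.sqrt (p * (1 - p)) := by
  obtain rfl : phi0 = hermiteFunction0 := funext hphi0
  obtain rfl : phi1 = hermiteFunction1 := funext hphi1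
  simp_rw [hpsi]
  refine (signCorrelation_superposition_sq integrable_hermiteFunction0_sq
    integrable_hermiteFunction1_sq integrable_hermiteFunction0_mul_hermiteFunction1
    √p √(1 - p)).trans ?_
  rw [integral_sign_mul_hermiteFunction0_sq, integral_sign_mul_hermiteFunction1_sq,
    integral_sign_mul_hermiteFunction0_mul_hermiteFunction1, ← sqrt_mul_sqrt_one_sub,
    mul_pow, inv_pow, sq_sqrt zero_le_two, sq_sqrt pi_pos.le]
  ring

/-- **Bit quadrature correlations of the photonic Bell state
`Ψ⁺ = √p|01⟩ + √(1−p)|10⟩`.** With `φ0, φ1` the first two normalized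
Hermite functions and `ψ(x,y) = √p·φ0(x)φ1(y) + √(1−p)·φ1(x)φ0(y)`, the
sign-binned quadrature correlation of the position distribution `ψ²`
equals `(4/π)·√(p(1−p))`, i.e. `4/π` times the negativity. -/
theorem bell_state_psi_bit_correlation (p : ℝ) (hp0 : 0 ≤ p) (hp1 : p ≤ 1)
    (phi0 phi1 : ℝ → ℝ)
    (hphi0 : ∀ x : ℝ, phi0 x = π ^ (-(1 : ℝ) / 4) * Real.exp (-x ^ 2 / 2))
    (hphi1 : ∀ x : ℝ, phi1 x =
      Real.sqrt 2 * π ^ (-(1 : ℝ) / 4) * x * Real.exp (-x ^ 2 / 2))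
    (psi : ℝ → ℝ → ℝ)
    (hpsi : ∀ x y : ℝ, psi x y =
      Real.sqrt p * phi0 x * phi1 y + Real.sqrt (1 - p) * phi1 x * phi0 y) :
    ∫ q : ℝ × ℝ, Real.sign (q.1 * q.2) * (psi q.1 q.2) ^ 2
      = (4 / π) * Real.sqrt (p * (1 - p)) :=
  bell_state_psi_bit_correlation_general p phi0 phi1 hphi0 hphi1 psi hpsi
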